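/- arXiv:2404.08077 — 4 statements merged into one kernel-verified Lean document; each statement's English description precedes it below -/
import Mathlib

section
/- Let u1, u2, u3, u4 be four points on the unit sphere S² in ℝ³ such that any three of them are linearly independent. Then the four points are not contained in any common closed hemisphere if and only if sign[u1,u2,u3] = sign[u1,u3,u4] = -sign[u1,u2,u4] = -sign[u2,u3,u4], where [u,v,w] denotes the determinant of the 3×3 matrix with columns u, v, w. -/
open Matrix

noncomputable section

/-- Determinant of the 3×3 matrix with columns `u`, `v`, `w`. -/
def det3 (u v w : Fin 3 → ℝ) : ℝ :=
  Matrix.det !![u 0, v 0, w 0; u 1, v 1, w 1; u 2, v 2, w 2]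

/-- `u` lies on the unit sphere S². -/
def onSphere (u : Fin 3 → ℝ) : Prop := u ⬝ᵥ u = 1

/-- `X` is contained in some closed hemisphere. -/
def InClosedHemisphere (X : Set (Fin 3 → ℝ)) : Prop :=
  ∃ n : Fin 3 → ℝ, n ⬝ᵥ n = 1 ∧ ∀ x ∈ X, 0 ≤ n ⬝ᵥ x

/-- `X` is balanced: not contained in any closed hemisphere. -/
def BalancedSet (X : Set (Fin 3 → ℝ)) : Prop := ¬ InClosedHemisphere X

/-- Radial projection to the unit sphere. -/
def normalize3 (x : Fin 3 → ℝ) : Fin 3 → ℝ := (Real.sqrt (x ⬝ᵥ x))⁻¹ • x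

/-- The open minor geodesic arc from `u` to `v` (endpoints excluded). -/
def openArc (u v : Fin 3 → ℝ) : Set (Fin 3 → ℝ) :=
  {x | ∃ s t : ℝ, 0 < s ∧ 0 < t ∧ x = normalize3 (s • u + t • v)}

/-- The closed minor geodesic arc from `u` to `v`. -/
def closedArc (u v : Fin 3 → ℝ) : Set (Fin 3 → ℝ) :=
  {x | ∃ s t : ℝ, 0 ≤ s ∧ 0 ≤ t ∧ 0 < s + t ∧ x = normalize3 (s • u + t • v)}

/-!
By Cramer's rule, `[u₂,u₃,u₄] u₁ - [u₁,u₃,u₄] u₂ + [u₁,u₂,u₄] u₃ - [u₁,u₂,u₃] u₄ = 0`, and the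
sign conditions say that the four coefficients of this dependency have the same strict sign.
Pairing a positive dependency with a vector `n` that is nonnegative on all `uᵢ` forces `n` to be
orthogonal to all of them, hence zero. Conversely, if a sign condition fails, then for
`D = [u₁,u₂,u₃]` one of the normals `D • (uᵢ ⨯₃ uⱼ)` to the planes through two of `u₁, u₂, u₃`
pairs with the third of them to `D² > 0` and with `u₄` to a nonnegative product of determinants,
so it bounds a closed hemisphere containing all four points.
-/

lemma Real.sign_eq_sign_iff_mul_pos {x y : ℝ} (hx : x ≠ 0) :
    Real.sign x = Real.sign y ↔ 0 < x * y := by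
  rcases hx.lt_or_gt with hx | hx <;> rcases lt_trichotomy y 0 with hy | rfl | hy <;>
    simp [Real.sign_of_neg, Real.sign_of_pos, mul_pos_iff, *, hx.not_gt]
  all_goals norm_num
  linarith

lemma Real.sign_eq_neg_sign_iff_mul_neg {x y : ℝ} (hx : x ≠ 0) :
    Real.sign x = -Real.sign y ↔ x * y < 0 := by
  rw [← Real.sign_neg, Real.sign_eq_sign_iff_mul_pos hx, mul_neg, neg_pos]

section Det3

variable (u v w : Fin 3 → ℝ)

lemma det3_eq_det : det3 u v w = (Matrix.of ![u, v, w]).det := by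
  simp [det3, det_fin_three]
  ring

lemma det3_eq_dotProduct_cross : det3 u v w = u ⬝ᵥ v ⨯₃ w := by
  rw [det3_eq_det, triple_product_eq_det]
  rfl

lemma det3_rotate : det3 u v w = det3 v w u := by
  rw [det3_eq_dotProduct_cross, det3_eq_dotProduct_cross, triple_product_permutation]

lemma det3_swap : det3 u w v = -det3 u v w := by
  rw [det3_eq_dotProduct_cross, det3_eq_dotProduct_cross, ← cross_anticomm v w, dotProduct_neg]

variable {u v w} in
lemma det3_ne_zero_of_linearIndependent (h : LinearIndependent ℝ ![u, v, w]) :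
    det3 u v w ≠ 0 := by
  rw [det3_eq_det]
  exact ((isUnit_iff_isUnit_det _).mp (linearIndependent_rows_iff_isUnit.mp h)).ne_zero

lemma det3_smul_eq_add (x : Fin 3 → ℝ) :
    det3 u v w • x = det3 x v w • u + det3 u x w • v + det3 u v x • w := by
  ext i
  fin_cases i <;> simp [det3, det_fin_three] <;> ring

lemma det3_mul_dotProduct (x n : Fin 3 → ℝ) :
    det3 u v w * (n ⬝ᵥ x) =
      det3 x v w * (n ⬝ᵥ u) + det3 u x w * (n ⬝ᵥ v) + det3 u v x * (n ⬝ᵥ w) := by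
  simpa only [dotProduct_add, dotProduct_smul, smul_eq_mul] using
    congrArg (n ⬝ᵥ ·) (det3_smul_eq_add u v w x)

variable {u v w} in
lemma eq_zero_of_det3_ne_zero_of_dotProduct_eq_zero {n : Fin 3 → ℝ} (hD : det3 u v w ≠ 0)
    (hu : n ⬝ᵥ u = 0) (hv : n ⬝ᵥ v = 0) (hw : n ⬝ᵥ w = 0) : n = 0 := by
  have h := det3_mul_dotProduct u v w n n
  rw [hu, hv, hw] at h
  simpa [hD] using h

end Det3

lemma inClosedHemisphere_of_dotProduct_nonneg {X : Set (Fin 3 → ℝ)} {m : Fin 3 → ℝ}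
    (hm : m ≠ 0) (hX : ∀ x ∈ X, 0 ≤ m ⬝ᵥ x) : InClosedHemisphere X := by
  have hmm : 0 < m ⬝ᵥ m := by simpa using dotProduct_self_star_pos_iff.mpr hm
  refine ⟨normalize3 m, ?_, fun x hx => ?_⟩
  · simp only [normalize3, smul_dotProduct, dotProduct_smul, smul_eq_mul, ← mul_assoc,
      ← mul_inv, Real.mul_self_sqrt hmm.le, inv_mul_cancel₀ hmm.ne']
  · simp only [normalize3, smul_dotProduct, smul_eq_mul]
    exact mul_nonneg (by positivity) (hX x hx)

lemma inClosedHemisphere_of_det3_mul_nonneg {a b c x : Fin 3 → ℝ} (hD : det3 a b c ≠ 0)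
    (hx : 0 ≤ det3 a b c * det3 a b x) : InClosedHemisphere {a, b, c, x} := by
  have hdot (y : Fin 3 → ℝ) : (det3 a b c • a ⨯₃ b) ⬝ᵥ y = det3 a b c * det3 y a b := by
    rw [smul_dotProduct, dotProduct_comm, det3_eq_dotProduct_cross y, smul_eq_mul]
  have hc : (det3 a b c • a ⨯₃ b) ⬝ᵥ c = det3 a b c * det3 a b c := by
    rw [hdot, det3_rotate c, det3_rotate a]
  refine inClosedHemisphere_of_dotProduct_nonneg (m := det3 a b c • a ⨯₃ b) (fun h0 => ?_) ?_
  · rw [h0, zero_dotProduct] at hc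
    exact hD (mul_self_eq_zero.mp hc.symm)
  · simp only [Set.mem_insert_iff, Set.mem_singleton_iff, forall_eq_or_imp, forall_eq]
    refine ⟨?_, ?_, hc ▸ mul_self_nonneg _, ?_⟩
    · rw [hdot, det3_eq_dotProduct_cross a a b, dot_self_cross, mul_zero]
    · rw [hdot, det3_eq_dotProduct_cross b a b, dot_cross_self, mul_zero]
    · rwa [hdot, det3_rotate x]

section FourPoints

variable {u₁ u₂ u₃ u₄ : Fin 3 → ℝ}

lemma inClosedHemisphere_of_not_det3_signs (hD : det3 u₁ u₂ u₃ ≠ 0)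
    (h : ¬(0 < det3 u₁ u₂ u₃ * det3 u₁ u₃ u₄ ∧ det3 u₁ u₂ u₃ * det3 u₁ u₂ u₄ < 0 ∧
      det3 u₁ u₂ u₃ * det3 u₂ u₃ u₄ < 0)) :
    InClosedHemisphere {u₁, u₂, u₃, u₄} := by
  have hD₂ : det3 u₂ u₃ u₁ = det3 u₁ u₂ u₃ := (det3_rotate u₁ u₂ u₃).symm
  have hD₃ : det3 u₃ u₁ u₂ = det3 u₁ u₂ u₃ := by rw [det3_rotate u₃, det3_rotate u₁]
  by_cases hB : 0 < det3 u₁ u₂ u₃ * det3 u₁ u₃ u₄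
  · by_cases hC : det3 u₁ u₂ u₃ * det3 u₁ u₂ u₄ < 0
    · have hA : 0 ≤ det3 u₂ u₃ u₁ * det3 u₂ u₃ u₄ := by
        rw [hD₂]
        exact not_lt.mp fun hA => h ⟨hB, hC, hA⟩
      have := inClosedHemisphere_of_det3_mul_nonneg (hD₂ ▸ hD) hA
      rwa [Set.insert_comm u₃ u₁, Set.insert_comm u₂ u₁] at this
    · exact inClosedHemisphere_of_det3_mul_nonneg hD (not_lt.mp hC)
  · have hB' : 0 ≤ det3 u₃ u₁ u₂ * det3 u₃ u₁ u₄ := by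
      rw [hD₃, det3_rotate u₃, det3_swap u₁ u₃ u₄, mul_neg, neg_nonneg]
      exact not_lt.mp hB
    have := inClosedHemisphere_of_det3_mul_nonneg (hD₃ ▸ hD) hB'
    rwa [Set.insert_comm u₃ u₁, Set.insert_comm u₃ u₂] at this

lemma not_inClosedHemisphere_of_det3_signs (hB : 0 < det3 u₁ u₂ u₃ * det3 u₁ u₃ u₄)
    (hC : det3 u₁ u₂ u₃ * det3 u₁ u₂ u₄ < 0) (hA : det3 u₁ u₂ u₃ * det3 u₂ u₃ u₄ < 0) :
    ¬InClosedHemisphere {u₁, u₂, u₃, u₄} := by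
  rintro ⟨n, hn, hX⟩
  have h₁ := hX u₁ (by simp)
  have h₂ := hX u₂ (by simp)
  have h₃ := hX u₃ (by simp)
  have h₄ := hX u₄ (by simp)
  have cramer := det3_mul_dotProduct u₁ u₂ u₃ u₄ n
  rw [det3_rotate u₄, det3_swap u₁ u₃ u₄] at cramer
  -- multiplied by `[u₁,u₂,u₃]`, the two sides of Cramer's identity have opposite signs
  have hsum : det3 u₁ u₂ u₃ * det3 u₂ u₃ u₄ * (n ⬝ᵥ u₁) - det3 u₁ u₂ u₃ * det3 u₁ u₃ u₄ * (n ⬝ᵥ u₂)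
      + det3 u₁ u₂ u₃ * det3 u₁ u₂ u₄ * (n ⬝ᵥ u₃) = det3 u₁ u₂ u₃ * det3 u₁ u₂ u₃ * (n ⬝ᵥ u₄) := by
    linear_combination -det3 u₁ u₂ u₃ * cramer
  have t₁ := mul_nonpos_of_nonpos_of_nonneg hA.le h₁
  have t₂ := mul_nonneg hB.le h₂
  have t₃ := mul_nonpos_of_nonpos_of_nonneg hC.le h₃
  have t₄ := mul_nonneg (mul_self_nonneg (det3 u₁ u₂ u₃)) h₄
  have z₁ := (mul_eq_zero.mp (by linarith : _ * (n ⬝ᵥ u₁) = 0)).resolve_left hA.ne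
  have z₂ := (mul_eq_zero.mp (by linarith : _ * (n ⬝ᵥ u₂) = 0)).resolve_left hB.ne'
  have z₃ := (mul_eq_zero.mp (by linarith : _ * (n ⬝ᵥ u₃) = 0)).resolve_left hC.ne
  have hD : det3 u₁ u₂ u₃ ≠ 0 := left_ne_zero_of_mul hB.ne'
  simp [eq_zero_of_det3_ne_zero_of_dotProduct_eq_zero hD z₁ z₂ z₃] at hn

end FourPoints

theorem four_points_balanced_iff_det_signs_general (u1 u2 u3 u4 : Fin 3 → ℝ)
    (hli123 : LinearIndependent ℝ ![u1, u2, u3]) :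
    BalancedSet {u1, u2, u3, u4} ↔
      (Real.sign (det3 u1 u2 u3) = Real.sign (det3 u1 u3 u4) ∧
       Real.sign (det3 u1 u2 u3) = - Real.sign (det3 u1 u2 u4) ∧
       Real.sign (det3 u1 u2 u3) = - Real.sign (det3 u2 u3 u4)) := by
  have hD := det3_ne_zero_of_linearIndependent hli123
  rw [Real.sign_eq_sign_iff_mul_pos hD, Real.sign_eq_neg_sign_iff_mul_neg hD,
    Real.sign_eq_neg_sign_iff_mul_neg hD]
  exact ⟨fun hbal => by_contra fun h => hbal (inClosedHemisphere_of_not_det3_signs hD h),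
    fun ⟨hB, hC, hA⟩ => not_inClosedHemisphere_of_det3_signs hB hC hA⟩

theorem four_points_balanced_iff_det_signs (u1 u2 u3 u4 : Fin 3 → ℝ)
    (h1 : onSphere u1) (h2 : onSphere u2) (h3 : onSphere u3) (h4 : onSphere u4)
    (hli123 : LinearIndependent ℝ ![u1, u2, u3])
    (hli124 : LinearIndependent ℝ ![u1, u2, u4])
    (hli134 : LinearIndependent ℝ ![u1, u3, u4])
    (hli234 : LinearIndependent ℝ ![u2, u3, u4]) :
    BalancedSet {u1, u2, u3, u4} ↔
      (Real.sign (det3 u1 u2 u3) = Real.sign (det3 u1 u3 u4) ∧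
       Real.sign (det3 u1 u2 u3) = - Real.sign (det3 u1 u2 u4) ∧
       Real.sign (det3 u1 u2 u3) = - Real.sign (det3 u2 u3 u4)) :=
  four_points_balanced_iff_det_signs_general u1 u2 u3 u4 hli123
end
end

section
/- Let u_i, u_{i+1}, u_j, u_{j+1} ∈ S² be in general position (any three linearly independent). The open minor spherical arcs from u_i to u_{i+1} and from u_j to u_{j+1} intersect if and only if [u_i,u_{i+1},u_j] and [u_{i+1},u_j,u_{j+1}] have the same sign, [u_i,u_{i+1},u_{j+1}] and [u_i,u_j,u_{j+1}] have the same sign, and these two common signs are opposite. -/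
open Matrix

noncomputable section

/-! Write `d = α a + β b + γ c` in the basis `a, b, c`. A point of both open arcs is the
direction of `s a + t b = r (p c + q d)` with `s, t, p, q, r > 0`; comparing coefficients, such a
point exists iff `α, β > 0 > γ`. By Cramer's rule `[b,c,d]`, `[a,c,d]`, `[a,b,d]` are `α`, `-β`,
`γ` times `[a,b,c]`, which turns the sign conditions into the same three inequalities. -/

lemma det3_eq_det_of (u v w : Fin 3 → ℝ) : det3 u v w = (Matrix.of ![u, v, w]).det := by
  simp [det3, Matrix.det_fin_three]; ring

lemma det3_ne_zero {u v w : Fin 3 → ℝ} (h : LinearIndependent ℝ ![u, v, w]) :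
    det3 u v w ≠ 0 := by
  rw [det3_eq_det_of, ← isUnit_iff_ne_zero, ← Matrix.isUnit_iff_isUnit_det]
  exact Matrix.linearIndependent_rows_iff_isUnit.1 h

lemma det3_cramer_left (a b c : Fin 3 → ℝ) (α β γ : ℝ) :
    det3 b c (α • a + β • b + γ • c) = α * det3 a b c := by
  simp [det3, Matrix.det_fin_three]; ring

lemma det3_cramer_middle (a b c : Fin 3 → ℝ) (α β γ : ℝ) :
    det3 a c (α • a + β • b + γ • c) = -β * det3 a b c := by
  simp [det3, Matrix.det_fin_three]; ring

lemma det3_cramer_right (a b c : Fin 3 → ℝ) (α β γ : ℝ) :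
    det3 a b (α • a + β • b + γ • c) = γ * det3 a b c := by
  simp [det3, Matrix.det_fin_three]; ring

lemma exists_eq_smul_add_smul_add_smul {u v w : Fin 3 → ℝ} (h : LinearIndependent ℝ ![u, v, w])
    (x : Fin 3 → ℝ) :
    ∃ α β γ : ℝ, x = α • u + β • v + γ • w := by
  have hspan := h.span_eq_top_of_card_eq_finrank (by simp)
  obtain ⟨f, hf⟩ :=
    (Submodule.mem_span_range_iff_exists_fun ℝ).1 (hspan ▸ Submodule.mem_top : x ∈ _)
  refine ⟨f 0, f 1, f 2, ?_⟩
  simpa [Fin.sum_univ_three, eq_comm] using hf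

lemma coeffs_eq_of_smul_add_smul_add_smul_eq {R M : Type*} [CommRing R] [AddCommGroup M]
    [Module R M] {u v w : M} (h : LinearIndependent R ![u, v, w]) {x y z x' y' z' : R}
    (heq : x • u + y • v + z • w = x' • u + y' • v + z' • w) : x = x' ∧ y = y' ∧ z = z' := by
  have hzero := Fintype.linearIndependent_iff.1 h ![x - x', y - y', z - z'] (by
    simp only [Fin.sum_univ_three, Matrix.cons_val_zero, Matrix.cons_val_one, Matrix.cons_val_two,
      Matrix.head_cons, Matrix.tail_cons]
    linear_combination (norm := module) heq)
  exact ⟨sub_eq_zero.1 (hzero 0), sub_eq_zero.1 (hzero 1), sub_eq_zero.1 (hzero 2)⟩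

lemma smul_add_smul_ne_zero {R M : Type*} [CommRing R] [AddCommGroup M] [Module R M] {u v w : M}
    (h : LinearIndependent R ![u, v, w]) {s t : R} (hs : s ≠ 0) : s • u + t • v ≠ 0 := fun hzero =>
  hs (coeffs_eq_of_smul_add_smul_add_smul_eq h (x' := 0) (y' := 0) (z := 0) (z' := 0)
    (by simpa using hzero)).1

lemma sqrt_dotProduct_self_smul_normalize3 (x : Fin 3 → ℝ) :
    Real.sqrt (x ⬝ᵥ x) • normalize3 x = x := by
  rcases eq_or_ne x 0 with rfl | hx
  · simp
  have hpos : 0 < Real.sqrt (x ⬝ᵥ x) :=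
    Real.sqrt_pos.2 (by simpa using dotProduct_self_star_pos_iff.2 hx)
  rw [normalize3, smul_smul, mul_inv_cancel₀ hpos.ne', one_smul]

lemma sqrt_dotProduct_self_pos {x : Fin 3 → ℝ} (hx : x ≠ 0) : 0 < Real.sqrt (x ⬝ᵥ x) :=
  (Real.sqrt_nonneg _).lt_of_ne' fun h0 => hx (by
    rw [← sqrt_dotProduct_self_smul_normalize3 x, h0, zero_smul])

lemma exists_pos_smul_of_normalize3_eq {x y : Fin 3 → ℝ} (hx : x ≠ 0)
    (h : normalize3 x = normalize3 y) : ∃ r : ℝ, 0 < r ∧ x = r • y := by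
  have hxy : x = Real.sqrt (x ⬝ᵥ x) • normalize3 y := by
    rw [← h, sqrt_dotProduct_self_smul_normalize3]
  have hy : y ≠ 0 := by
    rintro rfl
    exact hx (by simpa [normalize3] using hxy)
  have hsy := sqrt_dotProduct_self_pos hy
  refine ⟨Real.sqrt (x ⬝ᵥ x) / Real.sqrt (y ⬝ᵥ y), div_pos (sqrt_dotProduct_self_pos hx) hsy, ?_⟩
  calc x = Real.sqrt (x ⬝ᵥ x) • normalize3 y := hxy
    _ = (Real.sqrt (x ⬝ᵥ x) / Real.sqrt (y ⬝ᵥ y)) • (Real.sqrt (y ⬝ᵥ y) • normalize3 y) := by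
      rw [smul_smul, div_mul_cancel₀ _ hsy.ne']
    _ = _ := by rw [sqrt_dotProduct_self_smul_normalize3]

lemma openArc_inter_openArc_nonempty_iff {a b c d : Fin 3 → ℝ}
    (habc : LinearIndependent ℝ ![a, b, c]) {α β γ : ℝ} (hd : d = α • a + β • b + γ • c) :
    (openArc a b ∩ openArc c d).Nonempty ↔ 0 < α ∧ 0 < β ∧ γ < 0 := by
  constructor
  · rintro ⟨x, ⟨s, t, hs, ht, rfl⟩, ⟨p, q, hp, hq, hx⟩⟩
    obtain ⟨r, hr, hre⟩ :=
      exists_pos_smul_of_normalize3_eq (smul_add_smul_ne_zero habc hs.ne' (t := t)) hx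
    have hexp : r • (p • c + q • d) =
        (r * q * α) • a + (r * q * β) • b + (r * p + r * q * γ) • c := by
      rw [hd]; module
    obtain ⟨hsα, htβ, h0⟩ := coeffs_eq_of_smul_add_smul_add_smul_eq habc
      (x := s) (y := t) (z := 0) (x' := r * q * α) (y' := r * q * β) (z' := r * p + r * q * γ)
      (by rw [zero_smul, add_zero, hre, hexp])
    have hrq : 0 < r * q := mul_pos hr hq
    refine ⟨pos_of_mul_pos_right (hsα ▸ hs) hrq.le, pos_of_mul_pos_right (htβ ▸ ht) hrq.le, ?_⟩
    nlinarith [mul_pos hr hp]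
  · rintro ⟨hα, hβ, hγ⟩
    refine ⟨normalize3 (α • a + β • b), ⟨α, β, hα, hβ, rfl⟩, ⟨-γ, 1, neg_pos.2 hγ, one_pos, ?_⟩⟩
    congr 1
    rw [hd]; module

lemma det_signs_iff {D α β γ : ℝ} (hD : D ≠ 0) :
    (0 < D * (α * D) ∧ 0 < γ * D * (-β * D) ∧ D * (γ * D) < 0) ↔ 0 < α ∧ 0 < β ∧ γ < 0 := by
  have hD2 : 0 < D * D := mul_self_pos.2 hD
  have e1 : D * (α * D) = α * (D * D) := by ring
  have e2 : γ * D * (-β * D) = -(γ * β) * (D * D) := by ring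
  have e3 : -(D * (γ * D)) = -γ * (D * D) := by ring
  rw [e1, e2, ← neg_pos, e3, mul_pos_iff_of_pos_right hD2, mul_pos_iff_of_pos_right hD2,
    mul_pos_iff_of_pos_right hD2, neg_pos, neg_pos]
  constructor
  · rintro ⟨hα, hγβ, hγ⟩
    exact ⟨hα, pos_of_mul_neg_right hγβ hγ.le, hγ⟩
  · rintro ⟨hα, hβ, hγ⟩
    exact ⟨hα, mul_neg_of_neg_of_pos hγ hβ, hγ⟩

theorem arcs_intersect_iff_det_signs_general (a b c d : Fin 3 → ℝ)
    (habc : LinearIndependent ℝ ![a, b, c]) :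
    (openArc a b ∩ openArc c d).Nonempty ↔
      (0 < det3 a b c * det3 b c d ∧ 0 < det3 a b d * det3 a c d ∧
        det3 a b c * det3 a b d < 0) := by
  obtain ⟨α, β, γ, hd⟩ := exists_eq_smul_add_smul_add_smul habc d
  rw [openArc_inter_openArc_nonempty_iff habc hd, ← det_signs_iff (det3_ne_zero habc), hd,
    det3_cramer_left, det3_cramer_middle, det3_cramer_right]

theorem arcs_intersect_iff_det_signs (a b c d : Fin 3 → ℝ)
    (ha : onSphere a) (hb : onSphere b) (hc : onSphere c) (hd : onSphere d)
    (habc : LinearIndependent ℝ ![a, b, c])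
    (habd : LinearIndependent ℝ ![a, b, d])
    (hacd : LinearIndependent ℝ ![a, c, d])
    (hbcd : LinearIndependent ℝ ![b, c, d]) :
    (openArc a b ∩ openArc c d).Nonempty ↔
      (0 < det3 a b c * det3 b c d ∧ 0 < det3 a b d * det3 a c d ∧
        det3 a b c * det3 a b d < 0) :=
  arcs_intersect_iff_det_signs_general a b c d habc
end
end

section
/- Let Q = [u1,...,un] (n ≥ 4) be a balanced spherical polygon (with no three vertices on a common great circle) without self or antipodal intersections, and suppose exactly three of its vertices u_i, u_j, u_k are essential. Then no two of these three essential vertices are consecutive in the cyclic order of Q. -/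
/-!
Suppose `u p` and `u (p + 1)` are both essential, witnessed by closed half-spaces `0 ≤ a ⬝ᵥ x`
and `0 ≤ b ⬝ᵥ x` that miss only `u p`, resp. only `u (p + 1)`. Balancedness puts vertices
strictly on both sides of the great circle through `u p` and `u (p + 1)`, so some edge `m`
nonadjacent to edge `p` crosses it, at a point `v = ξ • u p + η • u (p + 1)`. Both half-spaces
contain `v`: `0 ≤ a ⬝ᵥ v` rules out `ξ > 0 > η` and `0 ≤ b ⬝ᵥ v` rules out `ξ < 0 < η`. Hence
`v` or `-v` lies on edge `p`, a self-intersection or an antipodal intersection with edge `m`.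
-/

open Matrix

noncomputable section

/-- The `i`-th edge of the closed spherical polygon with vertices `u`. -/
def edge {n : ℕ} (u : ZMod n → Fin 3 → ℝ) (i : ZMod n) : Set (Fin 3 → ℝ) :=
  closedArc (u i) (u (i + 1))

/-- No three vertices lie on a common great circle. -/
def GeneralPosition {n : ℕ} (u : ZMod n → Fin 3 → ℝ) : Prop :=
  ∀ i j k : ZMod n, i ≠ j → j ≠ k → i ≠ k → det3 (u i) (u j) (u k) ≠ 0

/-- Edges `i` and `j` are nonadjacent. -/
def Nonadjacent {n : ℕ} (i j : ZMod n) : Prop := j ≠ i ∧ j ≠ i + 1 ∧ i ≠ j + 1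

/-- The polygon is simple: nonadjacent edges do not intersect. -/
def SimplePolygon {n : ℕ} (u : ZMod n → Fin 3 → ℝ) : Prop :=
  ∀ i j : ZMod n, Nonadjacent i j → edge u i ∩ edge u j = ∅

/-- A spherical inflection at index `i`. -/
def Inflection {n : ℕ} (u : ZMod n → Fin 3 → ℝ) (i : ZMod n) : Prop :=
  det3 (u (i - 1)) (u i) (u (i + 1)) * det3 (u i) (u (i + 1)) (u (i + 2)) < 0

/-- Number of spherical inflections of the polygon. -/
def inflectionCount {n : ℕ} (u : ZMod n → Fin 3 → ℝ) : ℕ :=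
  Nat.card {i : ZMod n // Inflection u i}

/-- Number of self-intersections: unordered pairs of nonadjacent edges that meet. -/
def selfIntersectionCount {n : ℕ} (u : ZMod n → Fin 3 → ℝ) : ℕ :=
  Nat.card {p : ZMod n × ZMod n //
    Nonadjacent p.1 p.2 ∧ (edge u p.1 ∩ edge u p.2).Nonempty} / 2

/-- Number of antipodal intersections: unordered pairs of distinct edges such that
one meets the antipodal image of the other. -/
def antipodalIntersectionCount {n : ℕ} (u : ZMod n → Fin 3 → ℝ) : ℕ :=
  Nat.card {p : ZMod n × ZMod n //
    p.1 ≠ p.2 ∧ (edge u p.1 ∩ (Neg.neg '' edge u p.2)).Nonempty} / 2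

/-- Vertex `i` is essential: the remaining vertices lie in a common closed hemisphere. -/
def EssentialVertex {n : ℕ} (u : ZMod n → Fin 3 → ℝ) (i : ZMod n) : Prop :=
  InClosedHemisphere {x | ∃ j, j ≠ i ∧ x = u j}

lemma det3_eq_cross_dotProduct (x y z : Fin 3 → ℝ) : det3 x y z = (x ⨯₃ y) ⬝ᵥ z := by
  simp [det3, det_fin_three, cross_apply, dotProduct, Fin.sum_univ_three]
  ring

-- Cramer's rule in the basis `P, Q, w`.
lemma cross_dotProduct_smul_eq (P Q v w : Fin 3 → ℝ) :
    ((P ⨯₃ Q) ⬝ᵥ w) • v =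
      ((v ⨯₃ Q) ⬝ᵥ w) • P + ((P ⨯₃ v) ⬝ᵥ w) • Q + ((P ⨯₃ Q) ⬝ᵥ v) • w := by
  ext i
  fin_cases i <;> simp [cross_apply, dotProduct, Fin.sum_univ_three] <;> ring

lemma exists_eq_smul_add_smul_of_cross_dotProduct_eq_zero {P Q v w : Fin 3 → ℝ}
    (hw : (P ⨯₃ Q) ⬝ᵥ w ≠ 0) (hv : (P ⨯₃ Q) ⬝ᵥ v = 0) : ∃ ξ η : ℝ, v = ξ • P + η • Q := by
  refine ⟨((v ⨯₃ Q) ⬝ᵥ w) / (P ⨯₃ Q) ⬝ᵥ w, ((P ⨯₃ v) ⬝ᵥ w) / (P ⨯₃ Q) ⬝ᵥ w, ?_⟩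
  apply smul_right_injective _ hw
  simp only [cross_dotProduct_smul_eq P Q v w, hv, zero_smul, add_zero, smul_add, smul_smul]
  congr 2 <;> field_simp

lemma dotProduct_abs_smul_add_abs_smul_eq_zero {ι : Type*} [Fintype ι] {c x y : ι → ℝ}
    (h : c ⬝ᵥ x * c ⬝ᵥ y ≤ 0) : c ⬝ᵥ (|c ⬝ᵥ y| • x + |c ⬝ᵥ x| • y) = 0 := by
  rw [dotProduct_add, dotProduct_smul, dotProduct_smul, smul_eq_mul, smul_eq_mul]
  rcases le_total 0 (c ⬝ᵥ x) with hx | hx <;> rcases le_total 0 (c ⬝ᵥ y) with hy | hy <;>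
    simp only [abs_of_nonneg, abs_of_nonpos, hx, hy] <;> nlinarith

lemma mul_nonneg_of_dotProduct_smul_add_smul_nonneg {ι : Type*} [Fintype ι] {a b P Q : ι → ℝ}
    {ξ η : ℝ} (haP : a ⬝ᵥ P < 0) (haQ : 0 ≤ a ⬝ᵥ Q) (hbP : 0 ≤ b ⬝ᵥ P) (hbQ : b ⬝ᵥ Q < 0)
    (ha : 0 ≤ a ⬝ᵥ (ξ • P + η • Q)) (hb : 0 ≤ b ⬝ᵥ (ξ • P + η • Q)) : 0 ≤ ξ * η := by
  simp only [dotProduct_add, dotProduct_smul, smul_eq_mul] at ha hb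
  by_contra! hneg
  rcases mul_neg_iff.1 hneg with ⟨hξ, hη⟩ | ⟨hξ, hη⟩
  · nlinarith
  · nlinarith

lemma dotProduct_smul_add_smul_nonneg {ι : Type*} [Fintype ι] {a x y : ι → ℝ} {s t : ℝ}
    (hs : 0 ≤ s) (ht : 0 ≤ t) (hx : 0 ≤ a ⬝ᵥ x) (hy : 0 ≤ a ⬝ᵥ y) : 0 ≤ a ⬝ᵥ (s • x + t • y) := by
  rw [dotProduct_add, dotProduct_smul, dotProduct_smul, smul_eq_mul, smul_eq_mul]
  positivity

lemma exists_mul_succ_nonpos_of_mul_neg {f : ℕ → ℝ} {a b : ℕ} (hab : a ≤ b)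
    (h : f a * f b < 0) : ∃ r ∈ Set.Ico a b, f r * f (r + 1) ≤ 0 := by
  by_contra! H
  have hpos : ∀ r, a ≤ r → r ≤ b → 0 < f a * f r := by
    intro r har
    induction r, har using Nat.le_induction with
    | base =>
      intro _
      exact mul_self_pos.2 fun h0 => by simp [h0] at h
    | succ r har ih =>
      intro hrb
      nlinarith [mul_pos (ih (by omega)) (H r ⟨har, by omega⟩), sq_nonneg (f r)]
  exact (hpos b hab le_rfl).not_gt h

lemma add_natCast_ne {n : ℕ} (p : ZMod n) {k j : ℕ} (hk : k < n) (hj : j < n) (hkj : k ≠ j) :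
    p + k ≠ p + j := fun h => hkj <| by
  simpa [ZMod.val_natCast_of_lt hk, ZMod.val_natCast_of_lt hj] using
    congrArg ZMod.val (add_left_cancel h)

lemma ne_add_one_of_two_le {n : ℕ} (hn : 2 ≤ n) (q : ZMod n) : q ≠ q + 1 := by
  simpa using add_natCast_ne q (k := 0) (j := 1) (by omega) (by omega) zero_ne_one

lemma exists_nonadjacent_mul_succ_nonpos {n : ℕ} [NeZero n] {g : ZMod n → ℝ}
    {p l₁ l₂ : ZMod n} (hp : g p = 0) (hp' : g (p + 1) = 0) (h : g l₁ * g l₂ < 0) :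
    ∃ m, Nonadjacent p m ∧ g m * g (m + 1) ≤ 0 := by
  have hoff : ∀ l, g l ≠ 0 → ∃ k : ℕ, 2 ≤ k ∧ k < n ∧ l = p + k := by
    intro l hl
    have hl' : l = p + ((l - p).val : ZMod n) := by rw [ZMod.natCast_zmod_val]; ring
    refine ⟨(l - p).val, ?_, ZMod.val_lt _, hl'⟩
    by_contra! hk
    obtain h0 | h1 : (l - p).val = 0 ∨ (l - p).val = 1 := by omega
    · rw [h0, Nat.cast_zero, add_zero] at hl'
      exact hl (hl' ▸ hp)
    · rw [h1, Nat.cast_one] at hl'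
      exact hl (hl' ▸ hp')
  obtain ⟨k₁, hk₁, hk₁n, rfl⟩ := hoff l₁ fun h0 => by simp [h0] at h
  obtain ⟨k₂, hk₂, hk₂n, rfl⟩ := hoff l₂ fun h0 => by simp [h0] at h
  wlog hle : k₁ ≤ k₂ generalizing k₁ k₂
  · exact this k₂ hk₂ hk₂n k₁ hk₁ hk₁n (by linarith) (by omega)
  obtain ⟨r, ⟨hr₁, hr₂⟩, hr⟩ :=
    exists_mul_succ_nonpos_of_mul_neg (f := fun k : ℕ => g (p + k)) hle h
  refine ⟨p + r, ⟨?_, ?_, ?_⟩, by simpa [add_assoc] using hr⟩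
  · simpa using add_natCast_ne p (by omega : r < n) (by omega : 0 < n) (by omega : r ≠ 0)
  · simpa using add_natCast_ne p (by omega : r < n) (by omega : 1 < n) (by omega : r ≠ 1)
  · simpa [add_assoc] using
      (add_natCast_ne p (by omega : r + 1 < n) (by omega : 0 < n) (by omega : r + 1 ≠ 0)).symm

lemma BalancedSet.exists_dotProduct_neg {X : Set (Fin 3 → ℝ)} (hX : BalancedSet X)
    {c : Fin 3 → ℝ} (hc : c ≠ 0) : ∃ x ∈ X, c ⬝ᵥ x < 0 := by
  by_contra! h
  have hcc : 0 < c ⬝ᵥ c := by simpa using dotProduct_star_self_pos_iff.2 hc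
  refine hX ⟨(√(c ⬝ᵥ c))⁻¹ • c, ?_, fun x hx => ?_⟩
  · rw [smul_dotProduct, dotProduct_smul, smul_eq_mul, smul_eq_mul, ← mul_assoc, ← mul_inv,
      Real.mul_self_sqrt hcc.le, inv_mul_cancel₀ hcc.ne']
  · rw [smul_dotProduct, smul_eq_mul]
    exact mul_nonneg (by positivity) (h x hx)

lemma exists_dotProduct_neg_of_essentialVertex {n : ℕ} {u : ZMod n → Fin 3 → ℝ} {p : ZMod n}
    (hb : BalancedSet (Set.range u)) (hp : EssentialVertex u p) :
    ∃ a : Fin 3 → ℝ, (∀ l ≠ p, 0 ≤ a ⬝ᵥ u l) ∧ a ⬝ᵥ u p < 0 := by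
  obtain ⟨a, ha, hnonneg⟩ := hp
  have hsep : ∀ l ≠ p, 0 ≤ a ⬝ᵥ u l := fun l hl => hnonneg _ ⟨l, hl, rfl⟩
  obtain ⟨_, ⟨l, rfl⟩, hl⟩ := hb.exists_dotProduct_neg (c := a) (by rintro rfl; simp at ha)
  obtain rfl : l = p := by by_contra h; exact (hsep l h).not_gt hl
  exact ⟨a, hsep, hl⟩

lemma normalize3_neg (x : Fin 3 → ℝ) : normalize3 (-x) = -normalize3 x := by
  simp [normalize3]

lemma normalize3_mem_closedArc {x y : Fin 3 → ℝ} {s t : ℝ} (hs : 0 ≤ s) (ht : 0 ≤ t)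
    (h : s • x + t • y ≠ 0) : normalize3 (s • x + t • y) ∈ closedArc x y := by
  refine ⟨s, t, hs, ht, ?_, rfl⟩
  by_contra! hst
  obtain ⟨rfl, rfl⟩ : s = 0 ∧ t = 0 := ⟨by linarith, by linarith⟩
  simp at h

lemma normalize3_mem_closedArc_or_neg_mem {P Q : Fin 3 → ℝ} {ξ η : ℝ} (hξη : 0 ≤ ξ * η)
    (h : ξ • P + η • Q ≠ 0) :
    normalize3 (ξ • P + η • Q) ∈ closedArc P Q ∨ -normalize3 (ξ • P + η • Q) ∈ closedArc P Q := by
  rcases mul_nonneg_iff.1 hξη with ⟨hξ, hη⟩ | ⟨hξ, hη⟩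
  · exact Or.inl (normalize3_mem_closedArc hξ hη h)
  · right
    have hneg : -(ξ • P + η • Q) = (-ξ) • P + (-η) • Q := by module
    rw [← normalize3_neg, hneg]
    exact normalize3_mem_closedArc (by linarith) (by linarith) (hneg ▸ neg_ne_zero.2 h)

lemma smul_add_smul_ne_zero_of_det3_ne_zero {x y z : Fin 3 → ℝ} (h : det3 x y z ≠ 0)
    {s t : ℝ} (ht : t ≠ 0) : s • x + t • y ≠ 0 := by
  have hind : LinearIndependent ℝ ![x, y] := by
    rw [← crossProduct_ne_zero_iff_linearIndependent]
    rintro hxy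
    simp [det3_eq_cross_dotProduct, hxy] at h
  exact fun h0 => ht (LinearIndependent.pair_iff.1 hind s t h0).2

lemma exists_nonadjacent_edge_crossing {n : ℕ} (hn : 3 ≤ n) {u : ZMod n → Fin 3 → ℝ}
    (hgp : GeneralPosition u) (hb : BalancedSet (Set.range u)) (p : ZMod n) :
    ∃ m, Nonadjacent p m ∧
      (u p ⨯₃ u (p + 1)) ⬝ᵥ u m * (u p ⨯₃ u (p + 1)) ⬝ᵥ u (m + 1) ≤ 0 := by
  have : NeZero n := ⟨by omega⟩
  have hc : u p ⨯₃ u (p + 1) ≠ 0 := by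
    intro h0
    refine hgp p (p + 1) (p + (2 : ℕ)) (ne_add_one_of_two_le (by omega) p) ?_ ?_ ?_
    · simpa using (add_natCast_ne p (k := 2) (j := 1) (by omega) (by omega) (by omega)).symm
    · simpa using (add_natCast_ne p (k := 2) (j := 0) (by omega) (by omega) two_ne_zero).symm
    · rw [det3_eq_cross_dotProduct, h0, zero_dotProduct]
  obtain ⟨_, ⟨l₁, rfl⟩, hl₁⟩ := hb.exists_dotProduct_neg hc
  obtain ⟨_, ⟨l₂, rfl⟩, hl₂⟩ := hb.exists_dotProduct_neg (neg_ne_zero.2 hc)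
  rw [neg_dotProduct, neg_lt_zero] at hl₂
  exact exists_nonadjacent_mul_succ_nonpos (g := fun l => (u p ⨯₃ u (p + 1)) ⬝ᵥ u l)
    (by simp [dotProduct_comm]) (by simp [dotProduct_comm]) (mul_neg_of_neg_of_pos hl₁ hl₂)

theorem not_essentialVertex_add_one {n : ℕ} (hn : 3 ≤ n) {u : ZMod n → Fin 3 → ℝ}
    (hgp : GeneralPosition u) (hb : BalancedSet (Set.range u)) (hsimple : SimplePolygon u)
    (hanti : ∀ i j : ZMod n, i ≠ j → edge u i ∩ (Neg.neg '' edge u j) = ∅)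
    {p : ZMod n} (hp : EssentialVertex u p) : ¬ EssentialVertex u (p + 1) := by
  intro hp'
  have hsucc := ne_add_one_of_two_le (n := n) (by omega)
  obtain ⟨a, ha, haP⟩ := exists_dotProduct_neg_of_essentialVertex hb hp
  obtain ⟨b, hb', hbQ⟩ := exists_dotProduct_neg_of_essentialVertex hb hp'
  obtain ⟨m, ⟨hmp, hmp', hpm⟩, hcross⟩ := exists_nonadjacent_edge_crossing hn hgp hb p
  have hcm : (u p ⨯₃ u (p + 1)) ⬝ᵥ u m ≠ 0 := by
    rw [← det3_eq_cross_dotProduct]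
    exact hgp _ _ _ (hsucc p) hmp'.symm hmp.symm
  set v := |(u p ⨯₃ u (p + 1)) ⬝ᵥ u (m + 1)| • u m + |(u p ⨯₃ u (p + 1)) ⬝ᵥ u m| • u (m + 1)
  have hv0 : v ≠ 0 := smul_add_smul_ne_zero_of_det3_ne_zero
    (hgp m (m + 1) p (hsucc m) hpm.symm hmp) (abs_ne_zero.2 hcm)
  have hvm : normalize3 v ∈ edge u m := normalize3_mem_closedArc (abs_nonneg _) (abs_nonneg _) hv0
  have hav : 0 ≤ a ⬝ᵥ v := dotProduct_smul_add_smul_nonneg (abs_nonneg _) (abs_nonneg _)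
    (ha m hmp) (ha (m + 1) hpm.symm)
  have hbv : 0 ≤ b ⬝ᵥ v := dotProduct_smul_add_smul_nonneg (abs_nonneg _) (abs_nonneg _)
    (hb' m hmp') (hb' (m + 1) fun h => hmp (add_right_cancel h))
  obtain ⟨ξ, η, hξη⟩ : ∃ ξ η : ℝ, v = ξ • u p + η • u (p + 1) :=
    exists_eq_smul_add_smul_of_cross_dotProduct_eq_zero hcm
      (dotProduct_abs_smul_add_abs_smul_eq_zero hcross)
  rw [hξη] at hv0 hvm hav hbv
  have hsign : 0 ≤ ξ * η := mul_nonneg_of_dotProduct_smul_add_smul_nonneg haP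
    (ha _ (hsucc p).symm) (hb' _ (hsucc p)) hbQ hav hbv
  rcases normalize3_mem_closedArc_or_neg_mem hsign hv0 with h | h
  · exact Set.eq_empty_iff_forall_notMem.1 (hsimple p m ⟨hmp, hmp', hpm⟩) _ ⟨h, hvm⟩
  · exact Set.eq_empty_iff_forall_notMem.1 (hanti m p hmp) _ ⟨hvm, _, h, neg_neg _⟩

theorem essential_vertices_not_consecutive_general (n : ℕ) (hn : 4 ≤ n)
    (u : ZMod n → Fin 3 → ℝ)
    (hgp : GeneralPosition u)
    (hb : BalancedSet (Set.range u)) (hsimple : SimplePolygon u)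
    (hanti : ∀ i j : ZMod n, i ≠ j → edge u i ∩ (Neg.neg '' edge u j) = ∅)
    (i j k : ZMod n)
    (hei : EssentialVertex u i) (hej : EssentialVertex u j) (hek : EssentialVertex u k) :
    j ≠ i + 1 ∧ i ≠ j + 1 ∧ k ≠ i + 1 ∧ i ≠ k + 1 ∧ k ≠ j + 1 ∧ j ≠ k + 1 := by
  have key := fun p => not_essentialVertex_add_one (by omega) hgp hb hsimple hanti (p := p)
  exact ⟨fun h => key i hei (h ▸ hej), fun h => key j hej (h ▸ hei),
    fun h => key i hei (h ▸ hek), fun h => key k hek (h ▸ hei),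
    fun h => key j hej (h ▸ hek), fun h => key k hek (h ▸ hej)⟩

theorem essential_vertices_not_consecutive (n : ℕ) (hn : 4 ≤ n)
    (u : ZMod n → Fin 3 → ℝ)
    (hs : ∀ i, onSphere (u i)) (hgp : GeneralPosition u)
    (hb : BalancedSet (Set.range u)) (hsimple : SimplePolygon u)
    (hanti : ∀ i j : ZMod n, i ≠ j → edge u i ∩ (Neg.neg '' edge u j) = ∅)
    (i j k : ZMod n) (hij : i ≠ j) (hik : i ≠ k) (hjk : j ≠ k)
    (hei : EssentialVertex u i) (hej : EssentialVertex u j) (hek : EssentialVertex u k)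
    (honly : ∀ l : ZMod n, EssentialVertex u l → l = i ∨ l = j ∨ l = k) :
    j ≠ i + 1 ∧ i ≠ j + 1 ∧ k ≠ i + 1 ∧ i ≠ k + 1 ∧ k ≠ j + 1 ∧ j ≠ k + 1 :=
  essential_vertices_not_consecutive_general n hn u hgp hb hsimple hanti i j k hei hej hek
end
end

section
/- Let Q = [u1,...,un] (n ≥ 4) be a balanced simple spherical polygon on S², with Ess(Q) = 2, and let u_i, u_j denote the two essential vertices. If Q has no self or antipodal intersections, then since u_i and u_j are essential, the polygon Q̃ obtained by deleting both u_i and u_j is contained in an open hemisphere, and the spherical convex hulls of Q̃ and its antipodal image −Q̃ are disjoint. -/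
/-!
Essentiality of `u i` puts all other vertices in a closed hemisphere `m ⬝ᵥ x ≥ 0`. By general
position at most two of them lie on the bounding great circle, and since no edge meets the
antipodal image of another, those two are not antipodal. A convex combination of vertices that
vanishes can only use points on that circle, so `0` is not in the convex hull of `Q̃`.
Separating `0` from this compact hull yields an open hemisphere containing the hull of `Q̃`,
while the hull of `-Q̃` lies in the opposite one.
-/

open Matrix

noncomputable section

/-- Spherical convex hull: radial projection to S² of the convex hull in ℝ³. -/
def sHull (X : Set (Fin 3 → ℝ)) : Set (Fin 3 → ℝ) :=
  {y | ∃ x ∈ convexHull ℝ X, x ≠ 0 ∧ y = normalize3 x}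


section Normalize

variable (m x : Fin 3 → ℝ)

lemma dotProduct_normalize3 : m ⬝ᵥ normalize3 x = (√(x ⬝ᵥ x))⁻¹ * (m ⬝ᵥ x) := by
  simp only [normalize3, dotProduct_smul, smul_eq_mul]

lemma dotProduct_normalize3_pos_iff : 0 < m ⬝ᵥ normalize3 x ↔ 0 < m ⬝ᵥ x := by
  rcases eq_or_ne x 0 with rfl | hx
  · simp [normalize3]
  rw [dotProduct_normalize3]
  have hxx : 0 < x ⬝ᵥ x := by simpa using (dotProduct_self_star_pos_iff (v := x)).2 hx
  exact mul_pos_iff_of_pos_left (inv_pos.2 (Real.sqrt_pos.2 hxx))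

lemma normalize3_dotProduct_self {m : Fin 3 → ℝ} (hm : m ≠ 0) :
    normalize3 m ⬝ᵥ normalize3 m = 1 := by
  have hmm : 0 < m ⬝ᵥ m := by simpa using (dotProduct_self_star_pos_iff (v := m)).2 hm
  rw [dotProduct_normalize3, dotProduct_comm (normalize3 m), dotProduct_normalize3, ← mul_assoc,
    ← mul_inv, Real.mul_self_sqrt hmm.le, inv_mul_cancel₀ hmm.ne']

end Normalize

lemma exists_unit_forall_dotProduct_pos {S : Set (Fin 3 → ℝ)} {m₀ : Fin 3 → ℝ}
    (h : ∀ x ∈ S, 0 < m₀ ⬝ᵥ x) : ∃ m, m ⬝ᵥ m = 1 ∧ ∀ x ∈ S, 0 < m ⬝ᵥ x := by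
  rcases eq_or_ne m₀ 0 with rfl | hm₀
  · refine ⟨Pi.single 0 1, by simp, fun x hx => ?_⟩
    simpa using h x hx
  refine ⟨normalize3 m₀, normalize3_dotProduct_self hm₀, fun x hx => ?_⟩
  rw [dotProduct_comm, dotProduct_normalize3_pos_iff, dotProduct_comm]
  exact h x hx

lemma exists_forall_convexHull_dotProduct_pos {ι : Type*} [Fintype ι] [DecidableEq ι]
    {X : Set (ι → ℝ)} (hX : X.Finite) (h0 : 0 ∉ convexHull ℝ X) :
    ∃ m : ι → ℝ, ∀ x ∈ convexHull ℝ X, 0 < m ⬝ᵥ x := by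
  obtain ⟨f, c, hfc, hf⟩ := geometric_hahn_banach_point_closed (convex_convexHull ℝ X)
    (hX.isCompact_convexHull ℝ).isClosed h0
  refine ⟨(dotProductEquiv ℝ ι).symm f.toLinearMap, fun x hx => ?_⟩
  have hfx : (dotProductEquiv ℝ ι).symm f.toLinearMap ⬝ᵥ x = f x :=
    LinearMap.congr_fun ((dotProductEquiv ℝ ι).apply_symm_apply f.toLinearMap) x
  rw [hfx]
  rw [map_zero] at hfc
  exact hfc.trans (hf x hx)

lemma mem_convexHull_inter_ker_of_nonneg {E : Type*} [AddCommGroup E] [Module ℝ E]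
    {X : Set E} {p : E} (f : E →ₗ[ℝ] ℝ) (hX : ∀ x ∈ X, 0 ≤ f x) (hp : p ∈ convexHull ℝ X)
    (hfp : f p = 0) : p ∈ convexHull ℝ (X ∩ LinearMap.ker f) := by
  classical
  obtain ⟨ι, _, w, z, hw₀, hw₁, hz, rfl⟩ := mem_convexHull_iff_exists_fintype.1 hp
  have hterm : ∀ i, w i * f (z i) = 0 := by
    have hsum : ∑ i, w i * f (z i) = 0 := by simpa [map_sum] using hfp
    exact fun i => (Finset.sum_eq_zero_iff_of_nonneg fun i _ =>
      mul_nonneg (hw₀ i) (hX _ (hz i))).1 hsum i (Finset.mem_univ i)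
  -- Only the points carrying positive weight need to lie in the kernel.
  set t := Finset.univ.filter (w · ≠ 0)
  have hwt : ∑ i ∈ t, w i = 1 := by rw [Finset.sum_filter_ne_zero, hw₁]
  have hsum : ∑ i, w i • z i = t.centerMass w z := by
    rw [Finset.centerMass, hwt, inv_one, one_smul, Finset.sum_filter_of_ne]
    exact fun i _ h => left_ne_zero_of_smul h
  rw [hsum]
  refine t.centerMass_mem_convexHull (fun i _ => hw₀ i) (by rw [hwt]; exact one_pos)
    fun i hi => ⟨hz i, ?_⟩
  exact (mul_eq_zero.1 (hterm i)).resolve_left (Finset.mem_filter.1 hi).2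

lemma eq_neg_of_zero_mem_segment {ι : Type*} [Fintype ι] {a b : ι → ℝ}
    (hab : a ⬝ᵥ a = b ⬝ᵥ b) (h : 0 ∈ segment ℝ a b) : b = -a := by
  obtain ⟨p, q, hp, hq, hpq, h⟩ := h
  have h1 : p • a = -(q • b) := eq_neg_of_add_eq_zero_left h
  have h2 : (p ^ 2 - q ^ 2) * (a ⬝ᵥ a) = 0 := by
    have := congrArg (fun v => v ⬝ᵥ v) h1
    simp only [dotProduct_smul, smul_dotProduct, neg_dotProduct, dotProduct_neg,
      smul_eq_mul, ← hab] at this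
    linarith
  rcases mul_eq_zero.1 h2 with hpq2 | ha
  · have hpq' : p = q := by nlinarith
    have : (1 / 2 : ℝ) • (a + b) = 0 := by
      rw [← h, smul_add]; congr 1 <;> congr 1 <;> linarith
    exact (neg_eq_of_add_eq_zero_right ((smul_eq_zero.1 this).resolve_left (by norm_num))).symm
  · have ha0 : a = 0 := dotProduct_self_eq_zero.1 ha
    rw [ha, eq_comm] at hab
    rw [ha0, dotProduct_self_eq_zero.1 hab, neg_zero]

lemma Set.exists_subset_pair_of_forall_eq_or_eq {α : Type*} {Y : Set α} (hY : Y.Nonempty)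
    (h : ∀ a ∈ Y, ∀ b ∈ Y, ∀ c ∈ Y, a = b ∨ b = c ∨ a = c) :
    ∃ a ∈ Y, ∃ b ∈ Y, Y ⊆ {a, b} := by
  obtain ⟨a, ha⟩ := hY
  by_cases hb : ∃ b ∈ Y, b ≠ a
  · obtain ⟨b, hb, hba⟩ := hb
    refine ⟨a, ha, b, hb, fun c hc => ?_⟩
    rcases h a ha b hb c hc with h' | h' | h'
    · exact absurd h'.symm hba
    · exact Or.inr h'.symm
    · exact Or.inl h'.symm
  · push Not at hb
    exact ⟨a, ha, a, ha, fun c hc => Or.inl (hb c hc)⟩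

lemma det3_eq_zero_of_dotProduct_eq_zero {m a b c : Fin 3 → ℝ} (hm : m ≠ 0)
    (ha : m ⬝ᵥ a = 0) (hb : m ⬝ᵥ b = 0) (hc : m ⬝ᵥ c = 0) : det3 a b c = 0 := by
  refine Matrix.exists_vecMul_eq_zero_iff.1 ⟨m, hm, ?_⟩
  ext k
  fin_cases k <;> simp [vecMul, dotProduct, Fin.sum_univ_three] at ha hb hc ⊢ <;> linarith

lemma zero_notMem_convexHull_of_closedHemisphere {X : Set (Fin 3 → ℝ)} {m : Fin 3 → ℝ}
    (hm : m ≠ 0) (hXm : ∀ x ∈ X, 0 ≤ m ⬝ᵥ x) (hunit : ∀ x ∈ X, x ⬝ᵥ x = 1)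
    (hanti : ∀ x ∈ X, ∀ y ∈ X, y ≠ -x)
    (hgp : ∀ a ∈ X, ∀ b ∈ X, ∀ c ∈ X, a ≠ b → b ≠ c → a ≠ c → det3 a b c ≠ 0) :
    (0 : Fin 3 → ℝ) ∉ convexHull ℝ X := by
  intro h0
  set Y := X ∩ LinearMap.ker (dotProductEquiv ℝ (Fin 3) m)
  have h0Y : (0 : Fin 3 → ℝ) ∈ convexHull ℝ Y :=
    mem_convexHull_inter_ker_of_nonneg _ hXm h0 (map_zero _)
  have hY3 : ∀ a ∈ Y, ∀ b ∈ Y, ∀ c ∈ Y, a = b ∨ b = c ∨ a = c := by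
    intro a ha b hb c hc
    by_contra! hne
    exact hgp a ha.1 b hb.1 c hc.1 hne.1 hne.2.1 hne.2.2
      (det3_eq_zero_of_dotProduct_eq_zero hm ha.2 hb.2 hc.2)
  obtain ⟨a, ha, b, hb, hYab⟩ :=
    Set.exists_subset_pair_of_forall_eq_or_eq (convexHull_nonempty_iff.1 ⟨0, h0Y⟩) hY3
  have h0ab : (0 : Fin 3 → ℝ) ∈ segment ℝ a b := by
    rw [← convexHull_pair]
    exact convexHull_mono hYab h0Y
  exact hanti a ha.1 b hb.1
    (eq_neg_of_zero_mem_segment (by rw [hunit a ha.1, hunit b hb.1]) h0ab)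

lemma sHull_inter_sHull_neg_eq_empty {X : Set (Fin 3 → ℝ)} {m : Fin 3 → ℝ}
    (hm : ∀ x ∈ convexHull ℝ X, 0 < m ⬝ᵥ x) : sHull X ∩ sHull (Neg.neg '' X) = ∅ := by
  refine Set.eq_empty_iff_forall_notMem.2 ?_
  rintro _ ⟨⟨x, hx, -, rfl⟩, ⟨y, hy, -, hxy⟩⟩
  rw [Set.image_neg_eq_neg, convexHull_neg] at hy
  have hpos := (dotProduct_normalize3_pos_iff m x).2 (hm x hx)
  have hneg := (dotProduct_normalize3_pos_iff (-m) y).2 (by simpa using hm _ hy)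
  rw [hxy] at hpos
  rw [neg_dotProduct] at hneg
  linarith

section Polygon

variable {n : ℕ} {u : ZMod n → Fin 3 → ℝ}

lemma vertex_ne_neg_vertex (hs : ∀ i, onSphere (u i))
    (hanti : ∀ i j : ZMod n, i ≠ j → edge u i ∩ (Neg.neg '' edge u j) = ∅) (a b : ZMod n) :
    u b ≠ -u a := by
  have hvert : ∀ c, u c ∈ edge u c := fun c =>
    ⟨1, 0, zero_le_one, le_rfl, by norm_num, by simp [normalize3, show u c ⬝ᵥ u c = 1 from hs c]⟩
  intro hba
  rcases eq_or_ne a b with rfl | hab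
  · have : u a = 0 := self_eq_neg.1 hba
    simpa [onSphere, this] using hs a
  · refine (Set.eq_empty_iff_forall_notMem.1 (hanti b a hab.symm)) (u b) ⟨hvert b, ?_⟩
    exact ⟨u a, hvert a, hba.symm⟩

lemma GeneralPosition.det3_ne_zero (hgp : GeneralPosition u) {a b c : Fin 3 → ℝ}
    (ha : a ∈ Set.range u) (hb : b ∈ Set.range u) (hc : c ∈ Set.range u)
    (hab : a ≠ b) (hbc : b ≠ c) (hac : a ≠ c) : det3 a b c ≠ 0 := by
  obtain ⟨i, rfl⟩ := ha
  obtain ⟨j, rfl⟩ := hb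
  obtain ⟨k, rfl⟩ := hc
  exact hgp i j k (ne_of_apply_ne u hab) (ne_of_apply_ne u hbc) (ne_of_apply_ne u hac)

end Polygon

theorem two_essential_hulls_disjoint_general (n : ℕ) (hn : 4 ≤ n)
    (u : ZMod n → Fin 3 → ℝ)
    (hs : ∀ i, onSphere (u i)) (hgp : GeneralPosition u)
    (hanti : ∀ i j : ZMod n, i ≠ j → edge u i ∩ (Neg.neg '' edge u j) = ∅)
    (i j : ZMod n)
    (hei : EssentialVertex u i) :
    (∃ m : Fin 3 → ℝ, m ⬝ᵥ m = 1 ∧ ∀ l : ZMod n, l ≠ i → l ≠ j → 0 < m ⬝ᵥ u l) ∧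
    sHull {x | ∃ l, l ≠ i ∧ l ≠ j ∧ x = u l} ∩
      sHull (Neg.neg '' {x | ∃ l, l ≠ i ∧ l ≠ j ∧ x = u l}) = ∅ := by
  have : NeZero n := ⟨by omega⟩
  set X := {x | ∃ l, l ≠ i ∧ l ≠ j ∧ x = u l}
  have hXu : X ⊆ Set.range u := by rintro _ ⟨l, -, -, rfl⟩; exact ⟨l, rfl⟩
  obtain ⟨m₀, hm₀, hX⟩ := hei
  have h0 : (0 : Fin 3 → ℝ) ∉ convexHull ℝ X := by
    refine zero_notMem_convexHull_of_closedHemisphere (m := m₀) ?_ ?_ ?_ ?_ ?_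
    · rintro rfl; simp at hm₀
    · rintro _ ⟨l, hl, -, rfl⟩; exact hX _ ⟨l, hl, rfl⟩
    · rintro _ ⟨l, -, -, rfl⟩; exact hs l
    · rintro _ ⟨a, -, -, rfl⟩ _ ⟨b, -, -, rfl⟩; exact vertex_ne_neg_vertex hs hanti a b
    · exact fun a ha b hb c hc => hgp.det3_ne_zero (hXu ha) (hXu hb) (hXu hc)
  obtain ⟨m₁, hm₁⟩ :=
    exists_forall_convexHull_dotProduct_pos ((Set.finite_range u).subset hXu) h0
  obtain ⟨m, hm, hpos⟩ := exists_unit_forall_dotProduct_pos hm₁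
  exact ⟨⟨m, hm, fun l hi hj => hpos _ (subset_convexHull ℝ X ⟨l, hi, hj, rfl⟩)⟩,
    sHull_inter_sHull_neg_eq_empty hpos⟩

theorem two_essential_hulls_disjoint (n : ℕ) (hn : 4 ≤ n)
    (u : ZMod n → Fin 3 → ℝ)
    (hs : ∀ i, onSphere (u i)) (hgp : GeneralPosition u)
    (hb : BalancedSet (Set.range u)) (hsimple : SimplePolygon u)
    (hanti : ∀ i j : ZMod n, i ≠ j → edge u i ∩ (Neg.neg '' edge u j) = ∅)
    (i j : ZMod n) (hij : i ≠ j)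
    (hei : EssentialVertex u i) (hej : EssentialVertex u j)
    (honly : ∀ l : ZMod n, EssentialVertex u l → l = i ∨ l = j) :
    (∃ m : Fin 3 → ℝ, m ⬝ᵥ m = 1 ∧ ∀ l : ZMod n, l ≠ i → l ≠ j → 0 < m ⬝ᵥ u l) ∧
    sHull {x | ∃ l, l ≠ i ∧ l ≠ j ∧ x = u l} ∩
      sHull (Neg.neg '' {x | ∃ l, l ≠ i ∧ l ≠ j ∧ x = u l}) = ∅ :=
  two_essential_hulls_disjoint_general n hn u hs hgp hanti i j hei
end
end
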